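/- arXiv:2303.04943 — 2 statements merged into one kernel-verified Lean document; each statement's English description precedes it below -/
import Mathlib

section
/- For every fixed 0 ≤ x < y ≤ 1, the function z ↦ h(x, y, z) is strictly increasing on (0, ∞) ∖ {1}; that is, for all z, z' ∈ (0, ∞) ∖ {1} with z < z', one has h(x, y, z) < h(x, y, z'). -/
/-!
Write `h(x,y,z) = A + B·g(z)` with `B = (ξ'(y) - ξ'(x))(y - x)` and
`g(z) = 1/(z-1) - z log z/(z-1)²`. Since every exponent exceeds `1`, `ξ'` is strictly increasing
on `[0, ∞)`, so `B > 0`, and it remains to see that `g` is strictly increasing on `(0,∞) ∖ {1}`.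

On each of `(0,1)` and `(1,∞)` this holds because `g' = ψ/(z-1)³` with
`ψ(z) = (z+1) log z - 2(z-1)`, and `ψ` has the sign of `z - 1`. Across the gap at `1` we compare
with `-1/2`: `g(z) + 1/2 = φ(z)/(2(z-1)²)` with `φ(z) = z² - 1 - 2z log z`, which again has the
sign of `z - 1`. Both sign statements follow from `ψ(1) = φ(1) = 0` and `ψ', φ' > 0` off `1`.
-/

noncomputable section

/-- The mixed p-spin function `ξ(x) = Σ_j λ_j x^{p_j}`. -/
def xiF (n : ℕ) (p : Fin n → ℕ) (lam : Fin n → ℝ) : ℝ → ℝ :=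
  fun x => ∑ j, lam j * x ^ p j

/-- `h(x,y,z)`. -/
def hfun (ξ : ℝ → ℝ) (x y z : ℝ) : ℝ :=
  ξ y - ξ x - deriv ξ x * (y - x) +
    (deriv ξ y - deriv ξ x) * (y - x) * (1 / (z - 1) - z / (z - 1) ^ 2 * Real.log z)

/-- `r₂(x,y)`. -/
def r2f (ξ : ℝ → ℝ) (x y : ℝ) : ℝ :=
  deriv (deriv ξ) y * (y - x) / (deriv ξ y - deriv ξ x)

open Real Set

theorem strictMonoOn_of_forall_hasDerivAt_pos {D : Set ℝ} (hD : Convex ℝ D) {f f' : ℝ → ℝ}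
    (hf : ∀ x ∈ D, HasDerivAt f (f' x) x) (hf' : ∀ x ∈ D, 0 < f' x) : StrictMonoOn f D :=
  strictMonoOn_of_hasDerivWithinAt_pos hD (fun x hx => (hf x hx).continuousAt.continuousWithinAt)
    (fun x hx => (hf x (interior_subset hx)).hasDerivWithinAt)
    fun x hx => hf' x (interior_subset hx)

theorem strictMonoOn_Ioi_of_hasDerivAt_pos_of_ne {f f' : ℝ → ℝ} {a c : ℝ} (hac : a < c)
    (hf : ∀ t, a < t → HasDerivAt f (f' t) t) (hf' : ∀ t, a < t → t ≠ c → 0 < f' t) :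
    StrictMonoOn f (Ioi a) := by
  have hcont : ContinuousOn f (Ioi a) := fun t ht => (hf t ht).continuousAt.continuousWithinAt
  have hleft : StrictMonoOn f (Ioc a c) :=
    strictMonoOn_of_hasDerivWithinAt_pos (convex_Ioc a c) (hcont.mono Ioc_subset_Ioi_self)
      (fun t ht => by rw [interior_Ioc] at ht; exact (hf t ht.1).hasDerivWithinAt)
      (fun t ht => by rw [interior_Ioc] at ht; exact hf' t ht.1 ht.2.ne)
  have hright : StrictMonoOn f (Ici c) :=
    strictMonoOn_of_hasDerivWithinAt_pos (convex_Ici c)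
      (hcont.mono fun t ht => hac.trans_le ht)
      (fun t ht => by rw [interior_Ici] at ht; exact (hf t (hac.trans ht)).hasDerivWithinAt)
      (fun t ht => by rw [interior_Ici] at ht; exact hf' t (hac.trans ht) (ne_of_gt ht))
  simpa only [Ioc_union_Ici_eq_Ioi hac] using
    hleft.union hright (isGreatest_Ioc hac) isLeast_Ici

theorem one_sub_inv_lt_log {z : ℝ} (hz : 0 < z) (h1 : z ≠ 1) : 1 - z⁻¹ < log z := by
  have h := log_lt_sub_one_of_pos (inv_pos.2 hz) (by simpa using h1)
  rw [log_inv] at h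
  linarith

theorem strictMonoOn_add_one_mul_log_sub :
    StrictMonoOn (fun z : ℝ => (z + 1) * log z - 2 * (z - 1)) (Ioi 0) := by
  refine strictMonoOn_Ioi_of_hasDerivAt_pos_of_ne (f' := fun z => log z + z⁻¹ - 1) one_pos
    (fun t ht => ?_) (fun t ht h1 => by linarith [one_sub_inv_lt_log ht h1])
  have h := (((hasDerivAt_id t).add_const 1).mul (hasDerivAt_log ht.ne')).sub
    (((hasDerivAt_id t).sub_const 1).const_mul 2)
  refine h.congr_deriv ?_
  simp only [id]
  field_simp
  ring

theorem strictMonoOn_sq_sub_one_sub_mul_log :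
    StrictMonoOn (fun z : ℝ => z ^ 2 - 1 - 2 * z * log z) (Ioi 0) := by
  refine strictMonoOn_Ioi_of_hasDerivAt_pos_of_ne (f' := fun z => 2 * z - 2 * log z - 2) one_pos
    (fun t ht => ?_) (fun t ht h1 => by linarith [log_lt_sub_one_of_pos ht h1])
  have h := ((hasDerivAt_pow 2 t).sub_const 1).sub
    (((hasDerivAt_id t).const_mul 2).mul (hasDerivAt_log ht.ne'))
  refine h.congr_deriv ?_
  simp only [id]
  field_simp
  ring

def hWeight (z : ℝ) : ℝ := 1 / (z - 1) - z / (z - 1) ^ 2 * log z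

theorem hasDerivAt_hWeight {z : ℝ} (hz : 0 < z) (h1 : z ≠ 1) :
    HasDerivAt hWeight (((z + 1) * log z - 2 * (z - 1)) / (z - 1) ^ 3) z := by
  have hne : z - 1 ≠ 0 := sub_ne_zero.2 h1
  have hd : HasDerivAt (fun z : ℝ => z - 1) 1 z := (hasDerivAt_id z).sub_const 1
  have h := ((hasDerivAt_const z 1).div hd hne).sub
    (((hasDerivAt_id z).div (hd.pow 2) (pow_ne_zero 2 hne)).mul (hasDerivAt_log hz.ne'))
  refine h.congr_deriv ?_
  simp only [id, Pi.pow_apply, Pi.div_apply]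
  field_simp
  ring

theorem strictMonoOn_hWeight_Ioo : StrictMonoOn hWeight (Ioo 0 1) := by
  refine strictMonoOn_of_forall_hasDerivAt_pos (convex_Ioo 0 1)
    (fun t ht => hasDerivAt_hWeight ht.1 ht.2.ne) fun t ht => ?_
  have hψ : (t + 1) * log t - 2 * (t - 1) < 0 := by
    simpa using strictMonoOn_add_one_mul_log_sub ht.1 (mem_Ioi.2 one_pos) ht.2
  exact div_pos_of_neg_of_neg hψ (Odd.pow_neg (by decide) (by linarith [ht.2]))

theorem strictMonoOn_hWeight_Ioi : StrictMonoOn hWeight (Ioi 1) := by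
  refine strictMonoOn_of_forall_hasDerivAt_pos (convex_Ioi 1)
    (fun t ht => hasDerivAt_hWeight (one_pos.trans ht) (ne_of_gt ht)) fun t ht => ?_
  have ht0 : 0 < t := one_pos.trans ht
  have hψ : 0 < (t + 1) * log t - 2 * (t - 1) := by
    simpa using strictMonoOn_add_one_mul_log_sub (mem_Ioi.2 one_pos) ht0 ht
  exact div_pos hψ (pow_pos (sub_pos.2 ht) 3)

theorem hWeight_add_half {z : ℝ} (h1 : z ≠ 1) :
    hWeight z + 1 / 2 = (z ^ 2 - 1 - 2 * z * log z) / (2 * (z - 1) ^ 2) := by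
  have hne : z - 1 ≠ 0 := sub_ne_zero.2 h1
  unfold hWeight
  field_simp
  ring

theorem hWeight_lt_neg_half {z : ℝ} (hz : 0 < z) (h1 : z < 1) : hWeight z < -(1 / 2) := by
  have hφ : z ^ 2 - 1 - 2 * z * log z < 0 := by
    simpa using strictMonoOn_sq_sub_one_sub_mul_log hz (mem_Ioi.2 one_pos) h1
  have hne : z - 1 ≠ 0 := sub_ne_zero.2 h1.ne
  have := div_neg_of_neg_of_pos hφ (by positivity : 0 < 2 * (z - 1) ^ 2)
  linarith [hWeight_add_half h1.ne]

theorem neg_half_lt_hWeight {z : ℝ} (h1 : 1 < z) : -(1 / 2) < hWeight z := by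
  have hz : 0 < z := one_pos.trans h1
  have hφ : 0 < z ^ 2 - 1 - 2 * z * log z := by
    simpa using strictMonoOn_sq_sub_one_sub_mul_log (mem_Ioi.2 one_pos) hz h1
  have hne : z - 1 ≠ 0 := sub_ne_zero.2 h1.ne'
  have := div_pos hφ (by positivity : 0 < 2 * (z - 1) ^ 2)
  linarith [hWeight_add_half h1.ne']

theorem strictMonoOn_hWeight : StrictMonoOn hWeight (Ioi 0 \ {1}) := by
  rintro z ⟨hz : 0 < z, hz1 : z ≠ 1⟩ z' ⟨-, hz1' : z' ≠ 1⟩ hlt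
  rcases hz1'.lt_or_gt with h' | h'
  · exact strictMonoOn_hWeight_Ioo ⟨hz, hlt.trans h'⟩ ⟨hz.trans hlt, h'⟩ hlt
  rcases hz1.lt_or_gt with h | h
  · exact (hWeight_lt_neg_half hz h).trans (neg_half_lt_hWeight h')
  · exact strictMonoOn_hWeight_Ioi h h' hlt

theorem hasDerivAt_xiF (n : ℕ) (p : Fin n → ℕ) (lam : Fin n → ℝ) (t : ℝ) :
    HasDerivAt (xiF n p lam) (∑ j, lam j * (p j * t ^ (p j - 1))) t :=
  HasDerivAt.fun_sum fun j _ => (hasDerivAt_pow (p j) t).const_mul (lam j)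

theorem strictMonoOn_deriv_xiF {n : ℕ} (hn : 1 ≤ n) {p : Fin n → ℕ} (hp : ∀ i, 2 ≤ p i)
    {lam : Fin n → ℝ} (hlam : ∀ i, 0 < lam i) :
    StrictMonoOn (deriv (xiF n p lam)) (Ici 0) := by
  intro x hx y _ hxy
  simp only [(hasDerivAt_xiF n p lam _).deriv]
  refine Finset.sum_lt_sum_of_nonempty ⟨⟨0, hn⟩, Finset.mem_univ _⟩ fun j _ => ?_
  have hpj : (0 : ℝ) < p j := Nat.cast_pos.2 (zero_lt_two.trans_le (hp j))
  gcongr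
  · exact hlam j
  · have := hp j
    omega

theorem hfun_eq (ξ : ℝ → ℝ) (x y z : ℝ) :
    hfun ξ x y z = ξ y - ξ x - deriv ξ x * (y - x) +
      (deriv ξ y - deriv ξ x) * (y - x) * hWeight z := rfl

theorem hfun_strictMono_in_z_general
    (n : ℕ) (hn : 1 ≤ n) (p : Fin n → ℕ) (hp2 : ∀ i, 2 < p i)
    (lam : Fin n → ℝ) (hlam : ∀ i, 0 < lam i)
    (x y : ℝ) (hx : 0 ≤ x) (hxy : x < y) :
    ∀ z z' : ℝ, 0 < z → z ≠ 1 → 0 < z' → z' ≠ 1 → z < z' →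
      hfun (xiF n p lam) x y z < hfun (xiF n p lam) x y z' := by
  intro z z' hz hz1 hz' hz1' hlt
  have hξ' := strictMonoOn_deriv_xiF hn (fun i => (hp2 i).le) hlam hx (hx.trans hxy.le) hxy
  have hB : 0 < (deriv (xiF n p lam) y - deriv (xiF n p lam) x) * (y - x) :=
    mul_pos (sub_pos.2 hξ') (sub_pos.2 hxy)
  have hg := mul_lt_mul_of_pos_left (strictMonoOn_hWeight ⟨hz, hz1⟩ ⟨hz', hz1'⟩ hlt) hB
  rw [hfun_eq, hfun_eq]
  linarith

/-- For fixed `0 ≤ x < y ≤ 1`, the function `z ↦ h(x,y,z)` is strictly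
increasing on `(0, ∞) \ {1}`. -/
theorem hfun_strictMono_in_z
    (n : ℕ) (hn : 1 ≤ n) (p : Fin n → ℕ) (hp2 : ∀ i, 2 < p i) (hpmono : StrictMono p)
    (lam : Fin n → ℝ) (hlam : ∀ i, 0 < lam i) (hlamsum : ∑ i, lam i = 1)
    (x y : ℝ) (hx : 0 ≤ x) (hxy : x < y) (hy : y ≤ 1) :
    ∀ z z' : ℝ, 0 < z → z ≠ 1 → 0 < z' → z' ≠ 1 → z < z' →
      hfun (xiF n p lam) x y z < hfun (xiF n p lam) x y z' :=
  hfun_strictMono_in_z_general n hn p hp2 lam hlam x y hx hxy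
end
end

section
/- The function f : (0, ∞) → ℝ defined by f(z) = (z − 1 − z·log z)/(z − 1)² for z ≠ 1 and f(1) = −1/2 is strictly increasing on (0, ∞). -/
/-!
For every `z > 0`, including `z = 1`,
`(z - 1 - z log z) / (z - 1)² = -∫₀¹ t / (t + (1 - t) z) dt`, as one checks with the primitive
`t / (1 - z) - z / (1 - z)² · log (t + (1 - t) z)` of the integrand. For `0 < t < 1` the integrand
is strictly decreasing in `z`, so the integral is strictly decreasing and `f` strictly increasing.
-/

open Real Set intervalIntegral

lemma add_one_sub_mul_pos {t z : ℝ} (ht : t ∈ Icc (0 : ℝ) 1) (hz : 0 < z) :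
    0 < t + (1 - t) * z := by
  rcases ht.1.eq_or_lt with rfl | ht0
  · simpa using hz
  · nlinarith [mul_nonneg (sub_nonneg.2 ht.2) hz.le]

lemma div_add_one_sub_mul_le_of_le {t x y : ℝ} (ht : t ∈ Icc (0 : ℝ) 1) (hx : 0 < x)
    (hxy : x ≤ y) : t / (t + (1 - t) * y) ≤ t / (t + (1 - t) * x) := by
  have : 0 ≤ 1 - t := sub_nonneg.2 ht.2
  gcongr
  · exact ht.1
  · exact add_one_sub_mul_pos ht hx

lemma div_add_one_sub_mul_lt_of_lt {t x y : ℝ} (ht : t ∈ Ioo (0 : ℝ) 1) (hx : 0 < x)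
    (hxy : x < y) : t / (t + (1 - t) * y) < t / (t + (1 - t) * x) := by
  have : 0 < 1 - t := sub_pos.2 ht.2
  gcongr
  · exact ht.1
  · exact add_one_sub_mul_pos (Ioo_subset_Icc_self ht) hx

lemma continuousOn_div_add_one_sub_mul {z : ℝ} (hz : 0 < z) :
    ContinuousOn (fun t : ℝ => t / (t + (1 - t) * z)) (Icc 0 1) :=
  continuousOn_id.div (by fun_prop) fun _ ht => (add_one_sub_mul_pos ht hz).ne'

lemma hasDerivAt_primitive_div_add_one_sub_mul {t z : ℝ} (hz1 : z ≠ 1)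
    (hd : t + (1 - t) * z ≠ 0) :
    HasDerivAt (fun s : ℝ => s / (1 - z) - z / (1 - z) ^ 2 * log (s + (1 - s) * z))
      (t / (t + (1 - t) * z)) t := by
  have h1z : 1 - z ≠ 0 := sub_ne_zero.2 (Ne.symm hz1)
  have hlin : HasDerivAt (fun s : ℝ => s + (1 - s) * z) (1 + -1 * z) t :=
    (hasDerivAt_id t).add (((hasDerivAt_id t).const_sub 1).mul_const z)
  refine (((hasDerivAt_id t).div_const (1 - z)).sub
    ((hlin.log hd).const_mul (z / (1 - z) ^ 2))).congr_deriv ?_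
  generalize hd_def : t + (1 - t) * z = d at hd ⊢
  field_simp
  rw [← hd_def]
  ring

lemma integral_div_add_one_sub_mul {z : ℝ} (hz : 0 < z) (hz1 : z ≠ 1) :
    ∫ t in (0 : ℝ)..1, t / (t + (1 - t) * z) = (1 - z + z * log z) / (z - 1) ^ 2 := by
  rw [integral_eq_sub_of_hasDerivAt
    (fun t ht => hasDerivAt_primitive_div_add_one_sub_mul hz1
      (add_one_sub_mul_pos (uIcc_of_le (zero_le_one' ℝ) ▸ ht) hz).ne')
    ((continuousOn_div_add_one_sub_mul hz).intervalIntegrable_of_Icc zero_le_one)]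
  have h1z : 1 - z ≠ 0 := sub_ne_zero.2 (Ne.symm hz1)
  have hz1' : z - 1 ≠ 0 := sub_ne_zero.2 hz1
  simp only [sub_self, zero_mul, add_zero, log_one, mul_zero, zero_div, sub_zero, zero_add,
    one_mul]
  field_simp
  ring

lemma f_eq_neg_integral {z : ℝ} (hz : 0 < z) :
    (if z = 1 then -(1 / 2 : ℝ) else (z - 1 - z * log z) / (z - 1) ^ 2)
      = -∫ t in (0 : ℝ)..1, t / (t + (1 - t) * z) := by
  split_ifs with hz1
  · subst hz1
    norm_num
  · rw [integral_div_add_one_sub_mul hz hz1]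
    ring

/-- The continuous extension `f(z) = (z - 1 - z log z)/(z-1)²`, `f(1) = -1/2`,
is strictly increasing on `(0, ∞)`. -/
theorem f_strictMonoOn :
    StrictMonoOn
      (fun z : ℝ => if z = 1 then -(1 / 2) else (z - 1 - z * Real.log z) / (z - 1) ^ 2)
      (Set.Ioi 0) := by
  intro x hx y hy hxy
  simp only [f_eq_neg_integral hx, f_eq_neg_integral hy]
  exact neg_lt_neg <| integral_lt_integral_of_continuousOn_of_le_of_exists_lt zero_lt_one
    (continuousOn_div_add_one_sub_mul hy) (continuousOn_div_add_one_sub_mul hx)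
    (fun t ht => div_add_one_sub_mul_le_of_le (Ioc_subset_Icc_self ht) hx hxy.le)
    ⟨1 / 2, by norm_num, div_add_one_sub_mul_lt_of_lt (by norm_num) hx hxy⟩
end
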